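/- arXiv:1112.2434 — 3 statements merged into one kernel-verified Lean document; each statement's English description precedes it below -/
import Mathlib

section
/- Let K be a connected reductive group whose root system is a product of factors of type A or D (with the coroot lattice as specified for the symmetric subgroup K of a group G of type A₁, D₂ₙ, E₇, E₈). Then no nonzero element λ of the coroot lattice of K is minuscule for the ambient group, i.e. there is no nonzero λ in ℤΦ_K^∨ such that ⟨γ, λ⟩ ∈ {−1, 0, 1} for all roots γ of K. -/
/-! For simply-laced root systems normalized so that all roots have square length 2, coroots
are identified with roots and the pairing `⟨γ, λ⟩` is the inner product `⟪γ, λ⟫`.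

The factors are orthogonal, so `λ` splits into components in the coroot lattices of the
factors, each minuscule for its own factor; it suffices to treat a single standard factor.
There `λ` has integer coordinates `wₖ`. In type A, `∑ wₖ = 0` and `|wₖ - wₗ| ≤ 1`: a
coordinate `≥ 1` would make all coordinates nonnegative, hence zero. In type D, `∑ wₖ` is
even and `|wₖ ± wₗ| ≤ 1` for `k ≠ l`: a nonzero coordinate forces all others to vanish and
itself to be `±1`, so the sum would be odd. -/

open scoped RealInnerProductSpace

/-- The standard root system of type Aₘ₋₁ in ℝᵐ: the vectors `eᵢ − eⱼ`, `i ≠ j`. -/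
def typeARoots (m : ℕ) : Set (EuclideanSpace ℝ (Fin m)) :=
  {v | ∃ i j : Fin m, i ≠ j ∧
    v = EuclideanSpace.single i (1 : ℝ) - EuclideanSpace.single j (1 : ℝ)}

/-- The standard root system of type Dₘ in ℝᵐ: the vectors `±eᵢ ± eⱼ`, `i ≠ j`. -/
def typeDRoots (m : ℕ) : Set (EuclideanSpace ℝ (Fin m)) :=
  {v | ∃ i j : Fin m, ∃ s t : ℝ, (s = 1 ∨ s = -1) ∧ (t = 1 ∨ t = -1) ∧ i ≠ j ∧
    v = s • EuclideanSpace.single i (1 : ℝ) + t • EuclideanSpace.single j (1 : ℝ)}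

section Minuscule

variable {V : Type*} [NormedAddCommGroup V] [InnerProductSpace ℝ V]

def IsMinuscule (S : Set V) (v : V) : Prop :=
  ∀ γ ∈ S, ⟪γ, v⟫ = -1 ∨ ⟪γ, v⟫ = 0 ∨ ⟪γ, v⟫ = 1

def SpanHasNoMinuscule (S : Set V) : Prop :=
  ∀ v ∈ Submodule.span ℤ S, IsMinuscule S v → v = 0

theorem IsMinuscule.mono {S T : Set V} {v : V} (h : IsMinuscule T v) (hST : S ⊆ T) :
    IsMinuscule S v :=
  fun γ hγ => h γ (hST hγ)

theorem IsMinuscule.abs_inner_le_one {S : Set V} {v : V} (h : IsMinuscule S v) {γ : V}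
    (hγ : γ ∈ S) : |⟪γ, v⟫| ≤ 1 := by
  rcases h γ hγ with h | h | h <;> simp [h]

theorem SpanHasNoMinuscule.image {W : Type*} [NormedAddCommGroup W] [InnerProductSpace ℝ W]
    {S : Set W} (hS : SpanHasNoMinuscule S) {f : W →ₗ[ℝ] V}
    (hf : ∀ x y, ⟪f x, f y⟫ = ⟪x, y⟫) : SpanHasNoMinuscule (f '' S) := by
  intro v hv hmin
  rw [show f '' S = f.restrictScalars ℤ '' S from rfl, Submodule.span_image] at hv
  obtain ⟨u, hu, rfl⟩ := hv
  have hu0 : u = 0 := hS u hu fun γ hγ => by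
    simpa only [LinearMap.restrictScalars_apply, hf] using hmin (f γ) (Set.mem_image_of_mem f hγ)
  simp [hu0]

theorem SpanHasNoMinuscule.iUnion {ι : Type*} {P : ι → Set V}
    (horth : ∀ i j : ι, i ≠ j → ∀ a ∈ P i, ∀ b ∈ P j, ⟪a, b⟫ = 0)
    (hP : ∀ i, SpanHasNoMinuscule (P i)) : SpanHasNoMinuscule (⋃ i, P i) := by
  intro v hv hmin
  rw [Submodule.span_iUnion, Submodule.mem_iSup_iff_exists_finsupp] at hv
  obtain ⟨c, hc, rfl⟩ := hv
  suffices hc0 : ∀ i, c i = 0 by simp [Finsupp.sum, hc0]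
  intro i
  refine hP i (c i) (hc i) fun γ hγ => ?_
  have hcomponent : ⟪γ, c.sum fun _ x => x⟫ = ⟪γ, c i⟫ := by
    rw [Finsupp.sum, inner_sum]
    refine Finset.sum_eq_single i (fun j _ hji => ?_)
      (fun hi => by simp [Finsupp.notMem_support_iff.mp hi])
    exact (Submodule.isOrtho_span.mpr (horth i j hji.symm)).inner_eq (Submodule.subset_span hγ)
      (Submodule.span_le_restrictScalars ℤ ℝ _ (hc j))
  rw [← hcomponent]
  exact hmin γ (Set.mem_iUnion_of_mem i hγ)

end Minuscule

section Coordinates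

variable {ι : Type*} [Fintype ι]

theorem exists_int_coords_of_mem_span {S : Set (EuclideanSpace ℝ ι)} (T : AddSubgroup ℤ)
    (hS : ∀ γ ∈ S, ∃ w : ι → ℤ, (∀ k, γ k = w k) ∧ ∑ k, w k ∈ T)
    {ν : EuclideanSpace ℝ ι} (hν : ν ∈ Submodule.span ℤ S) :
    ∃ w : ι → ℤ, (∀ k, ν k = w k) ∧ ∑ k, w k ∈ T := by
  induction hν using Submodule.span_induction with
  | mem γ hγ => exact hS γ hγ
  | zero => exact ⟨0, by simp, by simp⟩
  | add x y _ _ hx hy =>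
    obtain ⟨w, hw, hwT⟩ := hx
    obtain ⟨w', hw', hw'T⟩ := hy
    exact ⟨w + w', by simp [hw, hw'],
      by simpa [Finset.sum_add_distrib] using T.add_mem hwT hw'T⟩
  | smul a x _ hx =>
    obtain ⟨w, hw, hwT⟩ := hx
    exact ⟨a • w, by simp [hw], by simpa [Finset.mul_sum] using T.zsmul_mem hwT a⟩

theorem nonpos_of_sum_eq_zero_of_abs_sub_le_one {w : ι → ℤ} (hsum : ∑ k, w k = 0)
    (h : ∀ k l, |w k - w l| ≤ 1) (k : ι) : w k ≤ 0 := by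
  by_contra! hk
  have hnonneg : ∀ l, 0 ≤ w l := fun l => by linarith [(abs_le.mp (h k l)).2]
  have := (Finset.sum_eq_zero_iff_of_nonneg fun l _ => hnonneg l).mp hsum k (Finset.mem_univ k)
  omega

theorem eq_zero_of_sum_eq_zero_of_abs_sub_le_one {w : ι → ℤ} (hsum : ∑ k, w k = 0)
    (h : ∀ k l, |w k - w l| ≤ 1) : w = 0 := by
  funext k
  have hneg : -w k ≤ 0 := nonpos_of_sum_eq_zero_of_abs_sub_le_one (w := -w) (by simp [hsum])
    (fun k l => by simpa only [Pi.neg_apply, neg_sub_neg] using h l k) k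
  exact le_antisymm (nonpos_of_sum_eq_zero_of_abs_sub_le_one hsum h k) (neg_nonpos.mp hneg)

theorem eq_zero_of_even_sum_of_abs_add_le_one [Nontrivial ι] {w : ι → ℤ}
    (heven : Even (∑ k, w k)) (hsub : ∀ k l, |w k - w l| ≤ 1)
    (hadd : ∀ k l, k ≠ l → |w k + w l| ≤ 1) : w = 0 := by
  by_contra hw
  obtain ⟨k, hk : w k ≠ 0⟩ := Function.ne_iff.mp hw
  have hothers : ∀ l, l ≠ k → w l = 0 := fun l hl => by
    have := abs_le.mp (hsub k l)
    have := abs_le.mp (hadd k l hl.symm)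
    omega
  have hsum : ∑ l, w l = w k :=
    Finset.sum_eq_single k (fun l _ hl => hothers l hl) (by simp)
  obtain ⟨l, hl⟩ := exists_ne k
  have hk_le := abs_le.mp (hadd k l hl.symm)
  rw [hothers l hl] at hk_le
  rw [hsum] at heven
  obtain ⟨r, hr⟩ := heven
  omega

end Coordinates

section TypeAD

variable {m : ℕ}

theorem inner_single_sub_single (i j : Fin m) (ν : EuclideanSpace ℝ (Fin m)) :
    ⟪EuclideanSpace.single i (1 : ℝ) - EuclideanSpace.single j 1, ν⟫ = ν i - ν j := by
  simp [inner_sub_left, EuclideanSpace.inner_single_left]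

theorem inner_single_add_single (i j : Fin m) (ν : EuclideanSpace ℝ (Fin m)) :
    ⟪EuclideanSpace.single i (1 : ℝ) + EuclideanSpace.single j 1, ν⟫ = ν i + ν j := by
  simp [inner_add_left, EuclideanSpace.inner_single_left]

theorem typeARoots_subset_typeDRoots : typeARoots m ⊆ typeDRoots m := by
  rintro _ ⟨i, j, hij, rfl⟩
  exact ⟨i, j, 1, -1, Or.inl rfl, Or.inr rfl, hij, by simp [sub_eq_add_neg]⟩

theorem exists_int_coords_of_mem_typeARoots {γ : EuclideanSpace ℝ (Fin m)}
    (hγ : γ ∈ typeARoots m) :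
    ∃ w : Fin m → ℤ, (∀ k, γ k = w k) ∧ ∑ k, w k ∈ (⊥ : AddSubgroup ℤ) := by
  obtain ⟨i, j, -, rfl⟩ := hγ
  exact ⟨Pi.single i 1 - Pi.single j 1, fun k => by simp [Pi.single_apply],
    by simp [Finset.sum_sub_distrib]⟩

theorem exists_int_coords_of_mem_typeDRoots {γ : EuclideanSpace ℝ (Fin m)}
    (hγ : γ ∈ typeDRoots m) :
    ∃ w : Fin m → ℤ, (∀ k, γ k = w k) ∧ ∑ k, w k ∈ AddSubgroup.zmultiples 2 := by
  have hunit : ∀ s : ℝ, s = 1 ∨ s = -1 → ∃ a : ℤ, s = a ∧ Odd a := by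
    rintro s (rfl | rfl)
    exacts [⟨1, by simp, odd_one⟩, ⟨-1, by simp, odd_neg_one⟩]
  obtain ⟨i, j, s, t, hs, ht, -, rfl⟩ := hγ
  obtain ⟨a, rfl, ha⟩ := hunit s hs
  obtain ⟨b, rfl, hb⟩ := hunit t ht
  refine ⟨Pi.single i a + Pi.single j b, fun k => by simp [Pi.single_apply], ?_⟩
  rw [Int.mem_zmultiples_iff, ← even_iff_two_dvd]
  simpa [Finset.sum_add_distrib] using ha.add_odd hb

theorem exists_int_coords_of_mem_span_typeARoots {ν : EuclideanSpace ℝ (Fin m)}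
    (hν : ν ∈ Submodule.span ℤ (typeARoots m)) :
    ∃ w : Fin m → ℤ, (∀ k, ν k = w k) ∧ ∑ k, w k = 0 := by
  simpa using exists_int_coords_of_mem_span ⊥ (fun _ => exists_int_coords_of_mem_typeARoots) hν

theorem exists_int_coords_of_mem_span_typeDRoots {ν : EuclideanSpace ℝ (Fin m)}
    (hν : ν ∈ Submodule.span ℤ (typeDRoots m)) :
    ∃ w : Fin m → ℤ, (∀ k, ν k = w k) ∧ Even (∑ k, w k) := by
  simpa [Int.mem_zmultiples_iff, ← even_iff_two_dvd] using
    exists_int_coords_of_mem_span _ (fun _ => exists_int_coords_of_mem_typeDRoots) hν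

theorem abs_sub_le_one_of_isMinuscule_typeARoots {ν : EuclideanSpace ℝ (Fin m)}
    (hmin : IsMinuscule (typeARoots m) ν) (k l : Fin m) : |ν k - ν l| ≤ 1 := by
  rcases eq_or_ne k l with rfl | hkl
  · simp
  · simpa [inner_single_sub_single] using hmin.abs_inner_le_one ⟨k, l, hkl, rfl⟩

theorem abs_add_le_one_of_isMinuscule_typeDRoots {ν : EuclideanSpace ℝ (Fin m)}
    (hmin : IsMinuscule (typeDRoots m) ν) {k l : Fin m} (hkl : k ≠ l) : |ν k + ν l| ≤ 1 := by
  have hγ : EuclideanSpace.single k (1 : ℝ) + EuclideanSpace.single l 1 ∈ typeDRoots m :=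
    ⟨k, l, 1, 1, Or.inl rfl, Or.inl rfl, hkl, by simp⟩
  simpa [inner_single_add_single] using hmin.abs_inner_le_one hγ

theorem spanHasNoMinuscule_typeARoots (m : ℕ) : SpanHasNoMinuscule (typeARoots m) := by
  intro ν hν hmin
  obtain ⟨w, hw, hsum⟩ := exists_int_coords_of_mem_span_typeARoots hν
  have hsub := abs_sub_le_one_of_isMinuscule_typeARoots hmin
  simp only [hw] at hsub
  have hw0 : w = 0 :=
    eq_zero_of_sum_eq_zero_of_abs_sub_le_one hsum fun k l => by exact_mod_cast hsub k l
  ext k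
  simp [hw, hw0]

theorem spanHasNoMinuscule_typeDRoots (m : ℕ) : SpanHasNoMinuscule (typeDRoots m) := by
  intro ν hν hmin
  cases subsingleton_or_nontrivial (Fin m) with
  | inl _ =>
    have hempty : typeDRoots m = ∅ :=
      Set.eq_empty_of_forall_notMem fun _ ⟨i, j, _, _, _, _, hij, _⟩ =>
        hij (Subsingleton.elim i j)
    simpa [hempty] using hν
  | inr _ =>
    obtain ⟨w, hw, heven⟩ := exists_int_coords_of_mem_span_typeDRoots hν
    have hsub := abs_sub_le_one_of_isMinuscule_typeARoots (hmin.mono typeARoots_subset_typeDRoots)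
    have hadd := fun k l (hkl : k ≠ l) => abs_add_le_one_of_isMinuscule_typeDRoots hmin hkl
    simp only [hw] at hsub hadd
    have hw0 : w = 0 := eq_zero_of_even_sum_of_abs_add_le_one heven
      (fun k l => by exact_mod_cast hsub k l) (fun k l hkl => by exact_mod_cast hadd k l hkl)
    ext k
    simp [hw, hw0]

end TypeAD

theorem no_nonzero_minuscule_element_in_coroot_lattice_of_type_A_or_D
    {V : Type*} [NormedAddCommGroup V] [InnerProductSpace ℝ V]
    {ι : Type*} (P : ι → Set V)
    -- the factors are mutually orthogonal
    (horth : ∀ i j : ι, i ≠ j → ∀ a ∈ P i, ∀ b ∈ P j, ⟪a, b⟫ = 0)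
    -- each factor is (an isometric copy of) a root system of type A or type D
    (htype : ∀ i : ι, ∃ (m : ℕ) (f : EuclideanSpace ℝ (Fin m) →ₗ[ℝ] V),
      (∀ x y : EuclideanSpace ℝ (Fin m), ⟪f x, f y⟫ = ⟪x, y⟫) ∧
      (P i = f '' typeARoots m ∨ P i = f '' typeDRoots m))
    (lam : V) (hlam : lam ∈ Submodule.span ℤ (⋃ i, P i)) (hne : lam ≠ 0) :
    ¬ ∀ γ ∈ ⋃ i, P i, ⟪γ, lam⟫ = -1 ∨ ⟪γ, lam⟫ = 0 ∨ ⟪γ, lam⟫ = 1 := by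
  intro hmin
  refine hne (SpanHasNoMinuscule.iUnion horth (fun i => ?_) lam hlam hmin)
  obtain ⟨m, f, hf, hA | hD⟩ := htype i
  · rw [hA]
    exact (spanHasNoMinuscule_typeARoots m).image hf
  · rw [hD]
    exact (spanHasNoMinuscule_typeDRoots m).image hf
end

section
/- Let ĝ be a simple Lie algebra with Coxeter number h, graded ĝ = ⊕_{n=1−h}^{h−1} ĝ(n) by the height of roots (via a regular semisimple s and regular nilpotent N with N: ĝ(n) → ĝ(n+1)). Suppose F• is an increasing filtration of ĝ by graded subspaces, each symmetric (dim Fᵢĝ(−n) = dim Fᵢĝ(n) for all n), stable under N. Then there is a unique index i with Gr^F_i ĝ(1−h) ≠ 0, and for that i the map N^{2h−2}: Gr^F_i ĝ(1−h) → Gr^F_i ĝ(h−1) is an isomorphism. -/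
/-! STATEMENT 15 -/

theorem unique_graded_piece_and_hard_lefschetz_on_graded_filtration
    {K V : Type*} [Field K] [AddCommGroup V] [Module K V] [FiniteDimensional K V]
    (h : ℕ) (hh : 2 ≤ h)
    (g : ℤ → Submodule K V)
    (hsupp : ∀ n : ℤ, g n ≠ ⊥ → 1 - (h : ℤ) ≤ n ∧ n ≤ (h : ℤ) - 1)
    (hsup : ⨆ n : ℤ, g n = ⊤) (hindep : iSupIndep g)
    (hlow : Module.finrank K ↥(g (1 - (h : ℤ))) = 1)
    (hhigh : Module.finrank K ↥(g ((h : ℤ) - 1)) = 1)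
    (N : Module.End K V) (hN : ∀ (n : ℤ), ∀ v ∈ g n, N v ∈ g (n + 1))
    (hiso : ∀ v ∈ g (1 - (h : ℤ)), (N ^ (2 * h - 2)) v = 0 → v = 0)
    (F : ℕ → Submodule K V) (hmono : Monotone F) (hF0 : F 0 = ⊥) (hFtop : ∃ m, F m = ⊤)
    (hgraded : ∀ i : ℕ, F i = ⨆ n : ℤ, F i ⊓ g n)
    (hsymm : ∀ (i : ℕ) (n : ℤ),
      Module.finrank K ↥(F i ⊓ g (-n)) = Module.finrank K ↥(F i ⊓ g n))
    (hstable : ∀ i : ℕ, ∀ v ∈ F i, N v ∈ F i) :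
    -- there is a unique index i with Gr^F_i ĝ(1−h) ≠ 0 ...
    (∃! i : ℕ, 1 ≤ i ∧ F i ⊓ g (1 - (h : ℤ)) ≠ F (i - 1) ⊓ g (1 - (h : ℤ))) ∧
    -- ... and for that index i the map N^{2h−2} : Gr^F_i ĝ(1−h) → Gr^F_i ĝ(h−1) is an
    -- isomorphism (injective and surjective on the graded pieces)
    (∀ i : ℕ, 1 ≤ i → F i ⊓ g (1 - (h : ℤ)) ≠ F (i - 1) ⊓ g (1 - (h : ℤ)) →
      (F i ⊓ g ((h : ℤ) - 1) ≠ F (i - 1) ⊓ g ((h : ℤ) - 1)) ∧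
      (∀ v ∈ F i ⊓ g (1 - (h : ℤ)), v ∉ F (i - 1) → (N ^ (2 * h - 2)) v ∉ F (i - 1)) ∧
      (∀ w ∈ F i ⊓ g ((h : ℤ) - 1), ∃ v ∈ F i ⊓ g (1 - (h : ℤ)),
        w - (N ^ (2 * h - 2)) v ∈ F (i - 1))) := by
  classical
  set a : ℤ := 1 - (h : ℤ) with ha
  set b : ℤ := (h : ℤ) - 1 with hb
  have hneg : -b = a := by simp [ha, hb]
  have hga : g a ≠ ⊥ := by
    intro hbot
    rw [hbot] at hlow
    simp at hlow
  have hgb : g b ≠ ⊥ := by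
    intro hbot
    rw [hbot] at hhigh
    simp at hhigh
  -- dichotomy for intersections with a 1-dimensional piece
  have hdich : ∀ (j : ℕ) (c : ℤ), Module.finrank K ↥(g c) = 1 →
      F j ⊓ g c = ⊥ ∨ F j ⊓ g c = g c := by
    intro j c hc
    have hle : F j ⊓ g c ≤ g c := inf_le_right
    have h1 : Module.finrank K ↥(F j ⊓ g c) ≤ 1 := hc ▸ Submodule.finrank_mono hle
    interval_cases hr : Module.finrank K ↥(F j ⊓ g c)
    · left
      exact Submodule.finrank_eq_zero.mp hr
    · right
      exact Submodule.eq_of_le_of_finrank_eq hle (by rw [hr, hc])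
  have hsymm' : ∀ j : ℕ, Module.finrank K ↥(F j ⊓ g a) =
      Module.finrank K ↥(F j ⊓ g b) := by
    intro j
    have := hsymm j b
    rwa [hneg] at this
  -- characterize jumps
  have hjump : ∀ i : ℕ, F i ⊓ g a ≠ F (i - 1) ⊓ g a →
      F (i - 1) ⊓ g a = ⊥ ∧ F i ⊓ g a = g a := by
    intro i hne
    rcases hdich (i-1) a hlow with h1 | h1 <;> rcases hdich i a hlow with h2 | h2
    · exact absurd (h2.trans h1.symm) hne
    · exact ⟨h1, h2⟩
    · exfalso
      have hle : F (i-1) ⊓ g a ≤ F i ⊓ g a :=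
        inf_le_inf_right _ (hmono (Nat.sub_le i 1))
      rw [h1, h2] at hle
      exact hga (le_bot_iff.mp hle)
    · exact absurd (h2.trans h1.symm) hne
  -- the jump index exists
  obtain ⟨m, hm⟩ := hFtop
  have hPm : F m ⊓ g a = g a := by rw [hm, top_inf_eq]
  have hex : ∃ j, F j ⊓ g a = g a := ⟨m, hPm⟩
  set i₀ := Nat.find hex with hi₀
  have hPi₀ : F i₀ ⊓ g a = g a := Nat.find_spec hex
  have hi₀pos : 1 ≤ i₀ := by
    by_contra h0
    have h0' : i₀ = 0 := by omega
    rw [h0', hF0, bot_inf_eq] at hPi₀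
    exact hga hPi₀.symm
  have hPi₀' : F (i₀ - 1) ⊓ g a = ⊥ := by
    rcases hdich (i₀ - 1) a hlow with h1 | h1
    · exact h1
    · exact absurd h1 (Nat.find_min hex (by omega))
  -- uniqueness of the jump index
  have huniq : ∀ i : ℕ, 1 ≤ i → F i ⊓ g a ≠ F (i-1) ⊓ g a → i = i₀ := by
    intro i hi hne
    obtain ⟨hb1, hf1⟩ := hjump i hne
    have h1 : i₀ ≤ i := Nat.find_le hf1
    have h2 : ¬ (i₀ ≤ i - 1) := by
      intro hle
      have := inf_le_inf_right (g a) (hmono hle)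
      rw [hPi₀, hb1] at this
      exact hga (le_bot_iff.mp this)
    omega
  -- powers of N shift degrees
  have hpow : ∀ (k : ℕ) (n : ℤ) (v : V), v ∈ g n → (N ^ k) v ∈ g (n + k) := by
    intro k
    induction k with
    | zero => intro n v hv; simpa using hv
    | succ k ih =>
      intro n v hv
      have h1 := hN (n + k) _ (ih n v hv)
      have h2 : (N ^ (k+1)) v = N ((N ^ k) v) := by
        rw [pow_succ']; rfl
      rw [h2]
      convert h1 using 2
      push_cast
      ring
  have hpow' : ∀ v : V, v ∈ g a → (N ^ (2*h-2)) v ∈ g b := by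
    intro v hv
    have := hpow (2*h-2) a v hv
    have heq : a + ((2*h-2 : ℕ) : ℤ) = b := by
      rw [ha, hb]
      push_cast [Nat.cast_sub (by omega : 2 ≤ 2*h)]
      ring
    rwa [heq] at this
  constructor
  · -- existence and uniqueness
    refine ⟨i₀, ⟨hi₀pos, ?_⟩, fun i hi => huniq i hi.1 hi.2⟩
    rw [hPi₀, hPi₀']
    exact hga
  · intro i hi hne
    obtain ⟨hbot, hfull⟩ := hjump i hne
    -- transfer to g b via symmetry
    have hbotb : F (i-1) ⊓ g b = ⊥ := by
      have := hsymm' (i-1)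
      rw [hbot] at this
      simp only [finrank_bot] at this
      have h0 : Module.finrank K ↥(F (i-1) ⊓ g b) = 0 := this.symm
      exact Submodule.finrank_eq_zero.mp h0
    have hfullb : F i ⊓ g b = g b := by
      have h1 := hsymm' i
      rw [hfull, hlow] at h1
      exact Submodule.eq_of_le_of_finrank_eq inf_le_right (by rw [← h1, hhigh])
    refine ⟨?_, ?_, ?_⟩
    · rw [hfullb, hbotb]; exact hgb
    · -- injectivity
      intro v hv hnv hcon
      have hva : v ∈ g a := hv.2
      have hnvb : (N ^ (2*h-2)) v ∈ g b := hpow' v hva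
      have : (N ^ (2*h-2)) v ∈ F (i-1) ⊓ g b := ⟨hcon, hnvb⟩
      rw [hbotb] at this
      have hv0 : v = 0 := hiso v hva this
      exact hnv (hv0 ▸ (F (i-1)).zero_mem)
    · -- surjectivity
      intro w hw
      -- choose a nonzero element of F i ⊓ g a = g a
      have hne' : F i ⊓ g a ≠ ⊥ := by rw [hfull]; exact hga
      obtain ⟨v₀, hv₀mem, hv₀ne⟩ := Submodule.exists_mem_ne_zero_of_ne_bot hne'
      have hv₀a : v₀ ∈ g a := hv₀mem.2
      set u : V := (N ^ (2*h-2)) v₀ with hu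
      have hub : u ∈ g b := hpow' v₀ hv₀a
      have hune : u ≠ 0 := fun h0 => hv₀ne (hiso v₀ hv₀a h0)
      -- span {u} = g b
      have hspan : Submodule.span K {u} = g b := by
        apply Submodule.eq_of_le_of_finrank_eq
        · rwa [Submodule.span_singleton_le_iff_mem]
        · rw [finrank_span_singleton hune, hhigh]
      have hwb : w ∈ g b := hw.2
      rw [← hspan] at hwb
      obtain ⟨c, hc⟩ := Submodule.mem_span_singleton.mp hwb
      refine ⟨c • v₀, Submodule.smul_mem _ c hv₀mem, ?_⟩
      have : (N ^ (2*h-2)) (c • v₀) = c • u := by rw [map_smul, hu]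
      rw [this, ← hc, sub_self]
      exact (F (i-1)).zero_mem
end

section
/- Let V be a finite-dimensional ℚ_ℓ-vector space with an action of a group Γ and a weight decomposition, and suppose det(V) is a character of Γ of finite order while a semisimple element s ∈ Γ acts on a grading V = ⊕ₙ V(n) by pⁿ on V(n) (p a prime), and there is N with N^{2n}: V(−n) ↪ V(n) injective for all n ≥ 0. Then dim V(−n) = dim V(n) for all n. -/
/-!
Write `d n = dim V(n)`. The maps `N^{2n}` give `d (-n) ≤ d n` for `n ≥ 0`. Computing `det s`
on a basis adapted to the grading gives `det s = p ^ (∑ n, n * d n)`; since `det s` is a root of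
unity and `p` has infinite multiplicative order, `∑ n, n * d n = 0`. Pairing `n` with `-n`
rewrites this sum as half of `∑ n, n * (d n - d (-n))`, a sum of nonnegative terms, so every
term vanishes.
-/

open Module Pointwise

theorem LinearMap.det_eq_prod_of_apply_basis_eq_smul {R M ι : Type*} [CommRing R] [AddCommGroup M]
    [Module R M] [Fintype ι] [DecidableEq ι] (b : Basis ι R M) {f : M →ₗ[R] M} {c : ι → R}
    (hf : ∀ i, f (b i) = c i • b i) :
    LinearMap.det f = ∏ i, c i := by
  have : f = Matrix.toLin b b (Matrix.diagonal c) := b.ext fun i ↦ by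
    rw [hf, Matrix.toLin_self, Finset.sum_eq_single i (by simp_all) (by simp)]
    simp
  rw [this, LinearMap.det_toLin, Matrix.det_diagonal]

theorem LinearMap.det_eq_prod_pow_finrank_of_isInternal {K V ι : Type*} [DecidableEq ι] [Field K]
    [AddCommGroup V] [Module K V] [FiniteDimensional K V] {N : ι → Submodule K V}
    (h : DirectSum.IsInternal N) (hN : {i | N i ≠ ⊥}.Finite) {f : V →ₗ[K] V} {c : ι → K}
    (hf : ∀ i, ∀ v ∈ N i, f v = c i • v) :
    LinearMap.det f = ∏ i ∈ hN.toFinset, c i ^ finrank K (N i) := by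
  set s := hN.toFinset
  replace h : DirectSum.IsInternal fun i : s ↦ N i := by
    convert DirectSum.isInternal_ne_bot_iff.mpr h <;> simp [s]
  let b (i : s) : Basis (Fin (finrank K (N i))) K (N i) := finBasis K (N i)
  rw [det_eq_prod_of_apply_basis_eq_smul (h.collectedBasis b)
    (fun j ↦ hf j.1 _ (h.collectedBasis_mem b j)), Fintype.prod_sigma, ← Finset.prod_coe_sort s]
  simp

theorem prod_zpow_eq_zpow_sum₀ {ι G : Type*} [CommGroupWithZero G] {x : G} (hx : x ≠ 0)
    (s : Finset ι) (f : ι → ℤ) : ∏ i ∈ s, x ^ f i = x ^ ∑ i ∈ s, f i := by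
  induction s using Finset.cons_induction with
  | empty => simp
  | cons a s ha ih => rw [Finset.prod_cons, Finset.sum_cons, ih, zpow_add₀ hx]

theorem eq_zero_of_zpow_eq_one {K : Type*} [DivisionRing K] {x : K}
    (hx : ∀ n : ℕ, 0 < n → x ^ n ≠ 1) {k : ℤ} (hk : x ^ k = 1) : k = 0 := by
  have hnatAbs : x ^ k.natAbs = 1 := by
    obtain ⟨n, rfl | rfl⟩ := Int.eq_nat_or_neg k
    · simpa using hk
    · simpa [zpow_neg] using hk
  by_contra hk0
  exact hx _ (Int.natAbs_pos.mpr hk0) hnatAbs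

theorem LinearMap.finrank_le_finrank_of_mapsTo {R M M' : Type*} [Ring R] [StrongRankCondition R]
    [AddCommGroup M] [Module R M] [AddCommGroup M'] [Module R M'] (f : M →ₗ[R] M')
    {A : Submodule R M} {B : Submodule R M'} [Module.Finite R B] (hmaps : ∀ v ∈ A, f v ∈ B)
    (hinj : ∀ v ∈ A, f v = 0 → v = 0) :
    finrank R A ≤ finrank R B :=
  LinearMap.finrank_le_finrank_of_injective (f := f.restrict hmaps) <|
    (injective_iff_map_eq_zero _).mpr fun v hv ↦ Subtype.ext <| hinj v v.2 congr(($hv : M'))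

section WeightMultiplicities

variable {d : ℤ → ℕ}

theorem mul_sub_apply_neg_nonneg (hle : ∀ n : ℕ, d (-n) ≤ d n) (n : ℤ) :
    0 ≤ n * ((d n : ℤ) - d (-n)) := by
  obtain ⟨k, rfl | rfl⟩ := Int.eq_nat_or_neg n
  · exact mul_nonneg (Int.natCast_nonneg k) (sub_nonneg.mpr (Int.ofNat_le.mpr (hle k)))
  · rw [neg_neg]
    exact mul_nonneg_of_nonpos_of_nonpos (by simp) (sub_nonpos.mpr (Int.ofNat_le.mpr (hle k)))

theorem apply_neg_eq_of_sum_mul_eq_zero {s : Finset ℤ} (hd : ∀ n ∉ s, d n = 0)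
    (hle : ∀ n : ℕ, d (-n) ≤ d n) (hsum : ∑ n ∈ s, n * (d n : ℤ) = 0) (n : ℤ) :
    d (-n) = d n := by
  set t := s ∪ -s
  have ht : -t = t := by ext; simp [t, Finset.mem_neg', or_comm]
  have hsum_t : ∑ n ∈ t, n * (d n : ℤ) = 0 := by
    rw [← Finset.sum_subset Finset.subset_union_left fun n _ hn ↦ by simp [hd n hn], hsum]
  have hsum_neg : ∑ n ∈ t, -n * (d (-n) : ℤ) = 0 := by
    have := Finset.sum_neg_index t fun n ↦ n * (d n : ℤ)
    rwa [ht, hsum_t, eq_comm] at this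
  have hsum_sub : ∑ n ∈ t, n * ((d n : ℤ) - d (-n)) = 0 := by
    calc ∑ n ∈ t, n * ((d n : ℤ) - d (-n))
        = ∑ n ∈ t, n * (d n : ℤ) + ∑ n ∈ t, -n * (d (-n) : ℤ) := by
          rw [← Finset.sum_add_distrib]; exact Finset.sum_congr rfl fun _ _ ↦ by ring
      _ = 0 := by rw [hsum_t, hsum_neg, add_zero]
  by_cases hn : n ∈ t
  · have := (Finset.sum_eq_zero_iff_of_nonneg fun n _ ↦ mul_sub_apply_neg_nonneg hle n).mp
      hsum_sub n hn
    rcases mul_eq_zero.mp this with rfl | h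
    · rfl
    · omega
  · have hneg : -n ∉ t := by rwa [← ht, Finset.mem_neg', neg_neg]
    simp only [t, Finset.mem_union, not_or] at hn hneg
    rw [hd n hn.1, hd (-n) hneg.1]

end WeightMultiplicities

theorem graded_pieces_symmetric_of_finite_order_determinant_general
    {K V : Type*} [Field K] [AddCommGroup V] [Module K V] [FiniteDimensional K V]
    (p : ℕ) (hpne : (p : K) ≠ 0)
    (hporder : ∀ n : ℕ, 0 < n → (p : K) ^ n ≠ 1)
    -- the grading V = ⨁ₙ V(n)
    (g : ℤ → Submodule K V) (hsup : ⨆ n : ℤ, g n = ⊤) (hindep : iSupIndep g)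
    -- s acts on V(n) by pⁿ
    (s : V ≃ₗ[K] V) (hs : ∀ (n : ℤ), ∀ v ∈ g n, s v = ((p : K) ^ n) • v)
    -- det(V) is a character of finite order: det s is a root of unity
    (hdet : ∃ m : ℕ, 0 < m ∧ (LinearMap.det (s : V →ₗ[K] V)) ^ m = 1)
    -- N^{2n} : V(−n) → V(n) is injective
    (N : V →ₗ[K] V)
    (hmap : ∀ n : ℕ, ∀ v ∈ g (-(n : ℤ)), (N ^ (2 * n)) v ∈ g (n : ℤ))
    (hinj : ∀ n : ℕ, ∀ v ∈ g (-(n : ℤ)), (N ^ (2 * n)) v = 0 → v = 0) :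
    ∀ n : ℤ, Module.finrank K ↥(g (-n)) = Module.finrank K ↥(g n) := by
  have hint : DirectSum.IsInternal g :=
    (DirectSum.isInternal_submodule_iff_iSupIndep_and_iSup_eq_top g).mpr ⟨hindep, hsup⟩
  have hfin := Submodule.finite_ne_bot_of_iSupIndep hindep
  have hdet_eq : LinearMap.det (s : V →ₗ[K] V) =
      (p : K) ^ ∑ n ∈ hfin.toFinset, n * (finrank K (g n) : ℤ) := by
    rw [LinearMap.det_eq_prod_pow_finrank_of_isInternal hint hfin hs,
      ← prod_zpow_eq_zpow_sum₀ hpne]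
    simp only [zpow_mul, zpow_natCast]
  obtain ⟨m, hm, hdm⟩ := hdet
  have hweight : ∑ n ∈ hfin.toFinset, n * (finrank K (g n) : ℤ) = 0 := by
    refine (mul_eq_zero.mp (eq_zero_of_zpow_eq_one hporder ?_)).resolve_right
      (Int.natCast_ne_zero.mpr hm.ne')
    rw [zpow_mul, ← hdet_eq, zpow_natCast, hdm]
  exact apply_neg_eq_of_sum_mul_eq_zero
    (fun n hn ↦ Submodule.finrank_eq_zero.mpr (by simpa using hn))
    (fun n ↦ (N ^ (2 * n)).finrank_le_finrank_of_mapsTo (hmap n) (hinj n)) hweight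

theorem graded_pieces_symmetric_of_finite_order_determinant
    {K V : Type*} [Field K] [AddCommGroup V] [Module K V] [FiniteDimensional K V]
    (p : ℕ) (hp : p.Prime) (hpne : (p : K) ≠ 0)
    (hporder : ∀ n : ℕ, 0 < n → (p : K) ^ n ≠ 1)
    -- the grading V = ⨁ₙ V(n)
    (g : ℤ → Submodule K V) (hsup : ⨆ n : ℤ, g n = ⊤) (hindep : iSupIndep g)
    -- s acts on V(n) by pⁿ
    (s : V ≃ₗ[K] V) (hs : ∀ (n : ℤ), ∀ v ∈ g n, s v = ((p : K) ^ n) • v)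
    -- det(V) is a character of finite order: det s is a root of unity
    (hdet : ∃ m : ℕ, 0 < m ∧ (LinearMap.det (s : V →ₗ[K] V)) ^ m = 1)
    -- N^{2n} : V(−n) → V(n) is injective
    (N : V →ₗ[K] V)
    (hmap : ∀ n : ℕ, ∀ v ∈ g (-(n : ℤ)), (N ^ (2 * n)) v ∈ g (n : ℤ))
    (hinj : ∀ n : ℕ, ∀ v ∈ g (-(n : ℤ)), (N ^ (2 * n)) v = 0 → v = 0) :
    ∀ n : ℤ, Module.finrank K ↥(g (-n)) = Module.finrank K ↥(g n) :=
  graded_pieces_symmetric_of_finite_order_determinant_general p hpne hporder g hsup hindep s hs hdet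
    N hmap hinj
end
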